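/- arXiv:2103.11947 — 3 statements merged into one kernel-verified Lean document; each statement's English description precedes it below -/
import Mathlib

section
/- Let q ∈ ℝ with |q| < 1, ψ(z) = (1 - qz)/√(1 - q²), and K_G(z,w) = ψ(z)·conj(ψ(w))/(1 - z·conj(w)). Then K_G(z,w) = ∑_{k,j≥1} M_{k,j} z^{k-1} conj(w)^{j-1} for z, w in the unit disc, where M is the inverse of the Kac–Murdock–Szegő matrix: M_{1,1} = 1/(1-q²), M_{k,k} = (1+q²)/(1-q²) for k ≥ 2, M_{k,j} = -q/(1-q²) for |k-j| = 1, 0 otherwise. -/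
/-!
The inverse KMS matrix is tridiagonal, so the double series splits into its diagonal, super- and
subdiagonal parts, each of which is a geometric series in `r = z * conj w`. Summing them gives
`((1 + q² r) - q (z + conj w)) / ((1 - q²) (1 - r))`, i.e. `(1 - q z) (1 - q conj w)` over
`(1 - q²) (1 - r)`, and the factor `1 / (1 - q²)` is exactly what the normalisation of `ψ`
contributes.
-/

open Complex ComplexConjugate Function Set

section Tridiagonal

variable {α : Type*} [AddCommMonoid α] [TopologicalSpace α]

theorem HasSum.indicator_range {β γ : Type*} {f : β → α} {a : α} {g : γ → β}
    (hg : Injective g) (h : HasSum (f ∘ g) a) :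
    HasSum ((range g).indicator f) a :=
  (hg.hasSum_iff fun _ hx => indicator_of_notMem hx f).1 (by rwa [indicator_range_comp])

theorem HasSum.of_tridiagonal [ContinuousAdd α] {f : ℕ × ℕ → α} {a b c : α}
    (hf : ∀ k j, k ≠ j → k + 1 ≠ j → j + 1 ≠ k → f (k, j) = 0)
    (hdiag : HasSum (fun n => f (n, n)) a) (hsup : HasSum (fun n => f (n, n + 1)) b)
    (hsub : HasSum (fun n => f (n + 1, n)) c) : HasSum f (a + b + c) := by
  have hsplit : f = (range fun n => (n, n)).indicator f + (range fun n => (n, n + 1)).indicator f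
      + (range fun n => (n + 1, n)).indicator f := by
    ext ⟨k, j⟩
    simp only [Pi.add_apply, indicator, mem_range, Prod.mk.injEq, exists_eq_left, exists_eq_right]
    split_ifs <;> first | omega | simp_all
  rw [hsplit]
  refine ((hdiag.indicator_range ?_).add (hsup.indicator_range ?_)).add
    (hsub.indicator_range ?_) <;> intro m n h <;> simpa using h

end Tridiagonal

/-- Indexed from `1` as in the paper; `kmsInv q 0 j` is meaningless. -/
noncomputable def kmsInv (q : ℝ) (k j : ℕ) : ℝ :=
  if k = j then (if k = 1 then 1 / (1 - q ^ 2) else (1 + q ^ 2) / (1 - q ^ 2))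
  else if ((k : ℤ) - (j : ℤ)).natAbs = 1 then -q / (1 - q ^ 2) else 0

namespace kmsInv

variable (q : ℝ)

theorem diag (n : ℕ) :
    kmsInv q (n + 1) (n + 1) = if n = 0 then 1 / (1 - q ^ 2) else (1 + q ^ 2) / (1 - q ^ 2) := by
  simp [kmsInv]

theorem superdiag (n : ℕ) : kmsInv q (n + 1) (n + 1 + 1) = -q / (1 - q ^ 2) := by
  simp [kmsInv]

theorem subdiag (n : ℕ) : kmsInv q (n + 1 + 1) (n + 1) = -q / (1 - q ^ 2) := by
  simp [kmsInv]

theorem eq_zero {k j : ℕ} (h₀ : k ≠ j) (h₁ : k + 1 ≠ j) (h₂ : j + 1 ≠ k) :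
    kmsInv q k j = 0 := by
  rw [kmsInv, if_neg h₀, if_neg (by omega)]

end kmsInv

theorem hasSum_kmsInv_kernel (q : ℝ) {z u : ℂ} (hzu : ‖z * u‖ < 1) :
    HasSum (fun p : ℕ × ℕ => (kmsInv q (p.1 + 1) (p.2 + 1) : ℂ) * z ^ p.1 * u ^ p.2)
      ((1 - q * z) * (1 - q * u) / ((1 - q ^ 2) * (1 - z * u))) := by
  have hgeo := hasSum_geometric_of_norm_lt_one hzu
  have hdiag : HasSum (fun n => (kmsInv q (n + 1) (n + 1) : ℂ) * z ^ n * u ^ n)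
      ((1 + q ^ 2) / (1 - q ^ 2) * (1 - z * u)⁻¹
        + (1 / (1 - q ^ 2) - (1 + q ^ 2) / (1 - q ^ 2))) := by
    refine ((hgeo.mul_left _).add (hasSum_ite_eq 0 _)).congr_fun fun n => ?_
    rcases eq_or_ne n 0 with rfl | hn
    · simp [kmsInv.diag]
    · rw [kmsInv.diag, if_neg hn, if_neg hn]
      push_cast
      ring
  have hsup : HasSum (fun n => (kmsInv q (n + 1) (n + 1 + 1) : ℂ) * z ^ n * u ^ (n + 1))
      (-q / (1 - q ^ 2) * u * (1 - z * u)⁻¹) := by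
    refine (hgeo.mul_left _).congr_fun fun n => ?_
    rw [kmsInv.superdiag]
    push_cast
    ring
  have hsub : HasSum (fun n => (kmsInv q (n + 1 + 1) (n + 1) : ℂ) * z ^ (n + 1) * u ^ n)
      (-q / (1 - q ^ 2) * z * (1 - z * u)⁻¹) := by
    refine (hgeo.mul_left _).congr_fun fun n => ?_
    rw [kmsInv.subdiag]
    push_cast
    ring
  have hzero (k j : ℕ) (h₀ : k ≠ j) (h₁ : k + 1 ≠ j) (h₂ : j + 1 ≠ k) :
      (kmsInv q (k + 1) (j + 1) : ℂ) * z ^ k * u ^ j = 0 := by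
    simp [kmsInv.eq_zero q (k := k + 1) (j := j + 1) (by omega) (by omega) (by omega)]
  convert HasSum.of_tridiagonal
    (f := fun p : ℕ × ℕ => (kmsInv q (p.1 + 1) (p.2 + 1) : ℂ) * z ^ p.1 * u ^ p.2)
    hzero hdiag hsup hsub using 1
  have h1 : (1 : ℂ) - z * u ≠ 0 := sub_ne_zero.2 fun h => by simp [← h] at hzu
  have ht : (1 - z * u)⁻¹ * (1 - z * u) = 1 := inv_mul_cancel₀ h1
  rw [div_eq_mul_inv, mul_inv]
  linear_combination (-q ^ 2 / (1 - q ^ 2)) * ht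

theorem div_sqrt_mul_conj_div_sqrt {c : ℝ} (hc : 0 ≤ c) (a b : ℂ) :
    a / (√c : ℂ) * conj (b / (√c : ℂ)) = a * conj b / c := by
  rw [map_div₀, conj_ofReal, div_mul_div_comm, ← ofReal_mul, Real.mul_self_sqrt hc]

/-- For the inverse `M` of the Kac–Murdock–Szegő matrix, the kernel
`∑_{k,j≥1} M_{k,j} z^{k-1} conj(w)^{j-1}` equals `ψ(z) conj(ψ(w)) / (1 - z conj w)`
with `ψ(z) = (1 - q z)/√(1-q²)`. -/
theorem stmt_10 (q : ℝ) (hq : |q| < 1)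
    (M : ℕ → ℕ → ℝ)
    (hM : ∀ k j, 1 ≤ k → 1 ≤ j → M k j =
      if k = j then
        (if k = 1 then 1 / (1 - q ^ 2) else (1 + q ^ 2) / (1 - q ^ 2))
      else if ((k : ℤ) - (j : ℤ)).natAbs = 1 then -q / (1 - q ^ 2) else 0)
    (ψ : ℂ → ℂ) (hψ : ∀ z, ψ z = (1 - q * z) / (Real.sqrt (1 - q ^ 2) : ℂ))
    (z w : ℂ) (hz : ‖z‖ < 1) (hw : ‖w‖ < 1) :
    (∑' p : ℕ × ℕ, (M (p.1 + 1) (p.2 + 1) : ℂ) * z ^ p.1 * ((starRingEnd ℂ) w) ^ p.2)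
      = ψ z * (starRingEnd ℂ) (ψ w) / (1 - z * (starRingEnd ℂ) w) := by
  have hq2 : 0 ≤ 1 - q ^ 2 := by nlinarith [abs_nonneg q, sq_abs q]
  have hzw : ‖z * conj w‖ < 1 := by
    rw [norm_mul, RCLike.norm_conj]
    exact mul_lt_one_of_nonneg_of_lt_one_left (norm_nonneg z) hz hw.le
  have hM' (p : ℕ × ℕ) : M (p.1 + 1) (p.2 + 1) = kmsInv q (p.1 + 1) (p.2 + 1) :=
    hM _ _ (by omega) (by omega)
  calc _ = ∑' p : ℕ × ℕ, (kmsInv q (p.1 + 1) (p.2 + 1) : ℂ) * z ^ p.1 * conj w ^ p.2 := by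
        simp only [hM']
    _ = (1 - q * z) * (1 - q * conj w) / ((1 - q ^ 2) * (1 - z * conj w)) :=
        (hasSum_kmsInv_kernel q hzw).tsum_eq
    _ = _ := by
        rw [hψ, hψ, div_sqrt_mul_conj_div_sqrt hq2, div_div]
        simp
end

section
/- Let z, w ∈ ℂ with |z| < 1 and |w| < 1. Then ∑_{n=1}^∞ P_n(z)·conj(P_n(w)) = 2/((1 - z)(1 - conj(w))(1 - z·conj(w))), where P_n(z) = √(2/(n(n+1)))·∑_{k=1}^{n} k·z^{k-1}. -/
/-!
Put `u = conj w` and `S_n(x) = ∑_{k ≤ n} (k + 1) x^k`, so that the `n`-th term is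
`2 / ((n + 1)(n + 2)) · S_n(z) S_n(u)`. Expanding the products and summing over `n` first, the
monomial `(j + 1)(k + 1) z^j u^k` collects the telescoping tail
`∑_{n ≥ max(j, k)} 2 / ((n + 1)(n + 2)) = 2 / (max(j, k) + 1)`, and since
`(j + 1)(k + 1) = (min(j, k) + 1)(max(j, k) + 1)` the series equals
`2 ∑_{j, k} (min(j, k) + 1) z^j u^k`. Reading `min(j, k) + 1` as the number of `m ≤ min(j, k)` and
substituting `j = m + i`, `k = m + l` turns this into the product of the geometric series in
`z`, `u` and `z u`.
-/

open Filter Topology Finset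

theorem hasSum_sub_succ_of_antitone {f : ℕ → ℝ} (hf : Antitone f)
    (hlim : Tendsto f atTop (𝓝 0)) : HasSum (fun n => f n - f (n + 1)) (f 0) := by
  rw [hasSum_iff_tendsto_nat_of_nonneg fun n => sub_nonneg.2 (hf n.le_succ)]
  simp only [sum_range_sub']
  simpa using tendsto_const_nhds.sub hlim

theorem hasSum_two_div_add_one_mul_add_two (m : ℕ) :
    HasSum (fun n : ℕ => (2 : ℝ) / (((n + m : ℕ) + 1) * ((n + m : ℕ) + 2))) (2 / (m + 1)) := by
  let f : ℕ → ℝ := fun n => 2 / ((n + m : ℕ) + 1)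
  have hf : Antitone f := fun i j hij => by dsimp only [f]; gcongr
  have hlim : Tendsto f atTop (𝓝 0) := by
    have := (tendsto_const_div_atTop_nhds_zero_nat (2 : ℝ)).comp (tendsto_add_atTop_nat (m + 1))
    refine this.congr fun n => ?_
    simp only [Function.comp_apply, Nat.cast_add, Nat.cast_one, f]
    ring
  convert hasSum_sub_succ_of_antitone hf hlim using 1
  · ext n
    simp only [f]
    push_cast
    field_simp
    ring
  · simp [f]

theorem tsum_ite_le_eq_tsum_nat_add {G : Type*} [AddCommMonoid G] [TopologicalSpace G]
    (f : ℕ → G) (m : ℕ) : ∑' n, (if m ≤ n then f n else 0) = ∑' n, f (n + m) := by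
  rw [← (add_left_injective m).tsum_eq]
  · simp
  · intro n hn
    exact ⟨n - m, Nat.sub_add_cancel (by_contra fun h => hn (if_neg h))⟩

theorem min_add_one_mul_max_add_one (j k : ℕ) :
    (min j k + 1) * (max j k + 1) = (j + 1) * (k + 1) := by
  rw [← min_add_add_right, ← max_add_add_right, min_mul_max]

theorem add_one_mul_add_one_div_max_add_one {K : Type*} [Field K] [CharZero K] (j k : ℕ) :
    ((j : K) + 1) * ((k : K) + 1) / ((max j k : ℕ) + 1) = (min j k : ℕ) + 1 := by
  rw [div_eq_iff (Nat.cast_add_one_ne_zero _)]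
  exact_mod_cast (min_add_one_mul_max_add_one j k).symm

theorem tsum_mul_sum_range_mul_sum_range {R : Type*} [NormedRing R] [CompleteSpace R]
    {c a b : ℕ → R} (hc : Summable (‖c ·‖))
    (ha : Summable (‖a ·‖)) (hb : Summable (‖b ·‖)) :
    ∑' n, c n * ((∑ j ∈ range (n + 1), a j) * ∑ k ∈ range (n + 1), b k) =
      ∑' p : ℕ × ℕ, (∑' n, c (n + max p.1 p.2)) * (a p.1 * b p.2) := by
  let F : ℕ → ℕ × ℕ → R := fun n p => if max p.1 p.2 ≤ n then c n * (a p.1 * b p.2) else 0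
  have hF : Summable (Function.uncurry F) := by
    have := summable_mul_of_summable_norm hc (ha.mul_norm hb)
    refine (this.indicator {t : ℕ × ℕ × ℕ | max t.2.1 t.2.2 ≤ t.1}).congr ?_
    rintro ⟨n, j, k⟩
    simp [F, Set.indicator_apply]
  have hrow : ∀ n, ∑' p, F n p =
      c n * ((∑ j ∈ range (n + 1), a j) * ∑ k ∈ range (n + 1), b k) := by
    intro n
    rw [tsum_eq_sum (s := range (n + 1) ×ˢ range (n + 1)), sum_product, sum_mul_sum, mul_sum]
    · refine sum_congr rfl fun j hj => ?_
      rw [mul_sum]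
      refine sum_congr rfl fun k hk => ?_
      simp_all [F]
    · intro p hp
      simp_all [F]
  have hcol : ∀ p : ℕ × ℕ, ∑' n, F n p = (∑' n, c (n + max p.1 p.2)) * (a p.1 * b p.2) := by
    intro p
    show ∑' n, (if max p.1 p.2 ≤ n then c n * (a p.1 * b p.2) else 0) = _
    rw [tsum_ite_le_eq_tsum_nat_add (fun n => c n * (a p.1 * b p.2)),
      Summable.tsum_mul_right _ ((summable_nat_add_iff (f := c) _).2 hc.of_norm)]
  rw [← tsum_congr hrow, ← hF.tsum_comm, tsum_congr hcol]

theorem hasSum_min_add_one_mul_pow_mul_pow {𝕜 : Type*} [NormedField 𝕜] [CompleteSpace 𝕜]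
    {z u : 𝕜} (hz : ‖z‖ < 1) (hu : ‖u‖ < 1) :
    HasSum (fun p : ℕ × ℕ => ((min p.1 p.2 : ℕ) + 1 : 𝕜) * (z ^ p.1 * u ^ p.2))
      ((1 - z)⁻¹ * (1 - u)⁻¹ * (1 - z * u)⁻¹) := by
  have hzu : ‖z * u‖ < 1 := by
    rw [norm_mul]; exact mul_lt_one_of_nonneg_of_lt_one_left (norm_nonneg z) hz hu.le
  have hnz := summable_norm_geometric_of_norm_lt_one hz
  have hnu := summable_norm_geometric_of_norm_lt_one hu
  have hprod : HasSum (fun p : ℕ × ℕ => z ^ p.1 * u ^ p.2) ((1 - z)⁻¹ * (1 - u)⁻¹) :=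
    (hasSum_geometric_of_norm_lt_one hz).mul (hasSum_geometric_of_norm_lt_one hu)
      (summable_mul_of_summable_norm hnz hnu)
  have hprod₃ : HasSum (fun q : (ℕ × ℕ) × ℕ => z ^ q.1.1 * u ^ q.1.2 * (z * u) ^ q.2)
      ((1 - z)⁻¹ * (1 - u)⁻¹ * (1 - z * u)⁻¹) :=
    hprod.mul (hasSum_geometric_of_norm_lt_one hzu) <|
      summable_mul_of_summable_norm (f := fun p : ℕ × ℕ => z ^ p.1 * u ^ p.2)
        (hnz.mul_norm hnu) (summable_norm_geometric_of_norm_lt_one hzu)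
  let F : (ℕ × ℕ) × ℕ → 𝕜 := fun q => if q.2 ≤ min q.1.1 q.1.2 then z ^ q.1.1 * u ^ q.1.2 else 0
  let e : (ℕ × ℕ) × ℕ → (ℕ × ℕ) × ℕ := fun q => ((q.1.1 + q.2, q.1.2 + q.2), q.2)
  have he : Function.Injective e := by
    rintro ⟨⟨i, l⟩, m⟩ ⟨⟨i', l'⟩, m'⟩ h
    simp only [e, Prod.mk.injEq] at h ⊢
    omega
  have hF : HasSum F ((1 - z)⁻¹ * (1 - u)⁻¹ * (1 - z * u)⁻¹) := by
    rw [← he.hasSum_iff]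
    · convert hprod₃ using 1
      ext ⟨⟨i, l⟩, m⟩
      show (if m ≤ min (i + m) (l + m) then z ^ (i + m) * u ^ (l + m) else 0) = _
      rw [if_pos (le_min (Nat.le_add_left m i) (Nat.le_add_left m l))]
      ring
    · rintro ⟨⟨j, k⟩, m⟩ hq
      by_cases hm : m ≤ min j k
      · exact absurd ⟨⟨⟨j - m, k - m⟩, m⟩, by simp only [Prod.mk.injEq, and_true, e]; omega⟩ hq
      · exact if_neg hm
  refine hF.prod_fiberwise fun p => ?_
  have hfin : ∀ m ∉ range (min p.1 p.2 + 1), F (p, m) = 0 := fun m hm =>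
    if_neg (by rwa [mem_range, Nat.lt_succ_iff] at hm)
  convert (hasSum_sum_of_ne_finset_zero hfin : HasSum _ _) using 1
  rw [sum_congr rfl fun m hm => if_pos (Nat.lt_succ_iff.1 (mem_range.1 hm))]
  simp

theorem summable_norm_add_one_mul_pow {x : ℂ} (hx : ‖x‖ < 1) :
    Summable fun j : ℕ => ‖((j : ℂ) + 1) * x ^ j‖ :=
  summable_norm_iff.2 <| ((summable_pow_mul_geometric_of_norm_lt_one 1 hx).add
    (summable_geometric_of_norm_lt_one hx)).congr fun j => by ring

theorem ofReal_sqrt_mul_mul_conj_ofReal_sqrt_mul {r : ℝ} (hr : 0 ≤ r) (x y : ℂ) :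
    (√r : ℂ) * x * (starRingEnd ℂ) ((√r : ℂ) * y) = r * (x * (starRingEnd ℂ) y) := by
  rw [map_mul, Complex.conj_ofReal, mul_mul_mul_comm, ← Complex.ofReal_mul,
    Real.mul_self_sqrt hr]

/-- For `z, w` in the open unit disc,
`∑_{n≥1} P_n(z) conj(P_n(w)) = 2/((1-z)(1-conj w)(1-z conj w))` where
`P_n(z) = √(2/(n(n+1))) ∑_{k=1}^n k z^{k-1}`. -/
theorem stmt_12 (P : ℕ → ℂ → ℂ)
    (hP : ∀ n z, P n z =
      (Real.sqrt (2 / (n * (n + 1))) : ℂ) * ∑ k ∈ Finset.range n, (k + 1 : ℂ) * z ^ k)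
    (z w : ℂ) (hz : ‖z‖ < 1) (hw : ‖w‖ < 1) :
    (∑' n : ℕ, P (n + 1) z * (starRingEnd ℂ) (P (n + 1) w))
      = 2 / ((1 - z) * (1 - (starRingEnd ℂ) w) * (1 - z * (starRingEnd ℂ) w)) := by
  set u := (starRingEnd ℂ) w
  have hu : ‖u‖ < 1 := by rwa [Complex.norm_conj]
  let c : ℕ → ℂ := fun n => ((2 / (((n : ℝ) + 1) * ((n : ℝ) + 2)) : ℝ) : ℂ)
  have hterm : ∀ n, P (n + 1) z * (starRingEnd ℂ) (P (n + 1) w) =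
      c n * ((∑ j ∈ range (n + 1), ((j : ℂ) + 1) * z ^ j) *
        ∑ k ∈ range (n + 1), ((k : ℂ) + 1) * u ^ k) := by
    intro n
    rw [hP, hP, ofReal_sqrt_mul_mul_conj_ofReal_sqrt_mul (by positivity), map_sum]
    simp only [c, map_mul, map_add, map_one, map_natCast, map_pow]
    push_cast
    ring
  have htail : ∀ m : ℕ, ∑' n, c (n + m) = 2 / ((m : ℂ) + 1) := fun m => by
    have := (Complex.hasSum_ofReal.2 (hasSum_two_div_add_one_mul_add_two m)).tsum_eq
    push_cast at this
    simpa [c] using this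
  have hweight : ∀ j k : ℕ, 2 / (((max j k : ℕ) : ℂ) + 1) * (((j : ℂ) + 1) * z ^ j *
      (((k : ℂ) + 1) * u ^ k)) = 2 * (((min j k : ℕ) + 1 : ℂ) * (z ^ j * u ^ k)) := by
    intro j k
    rw [← add_one_mul_add_one_div_max_add_one]
    ring
  have hc : Summable (‖c ·‖) := by
    refine (hasSum_two_div_add_one_mul_add_two 0).summable.abs.congr fun n => ?_
    simp only [c, Complex.norm_real, Real.norm_eq_abs, Nat.add_zero]
  rw [tsum_congr hterm, tsum_mul_sum_range_mul_sum_range hc (summable_norm_add_one_mul_pow hz)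
      (summable_norm_add_one_mul_pow hu),
    tsum_congr fun p => by rw [htail, hweight], tsum_mul_left,
    (hasSum_min_add_one_mul_pow_mul_pow hz hu).tsum_eq, div_eq_mul_inv, mul_inv, mul_inv]
end

section
/- For n a positive integer and q real nonzero with |q| < 1/2, set α = 1/(2|q|) and let U_k be the Chebyshev polynomials of the second kind. The n×n symmetric matrix M with entries M_{k,j} = (−1)^{k+j} (q^{j−k}/|q|^{j−k+1}) · U_{k−1}(α)U_{n−j}(α)/U_n(α) for k ≤ j (and M_{j,k} = M_{k,j}) satisfies M·G_n = I, where G_n is the n×n tridiagonal Toeplitz matrix with 1 on the diagonal and q on the sub- and super-diagonals. -/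
/-!
A symmetric tridiagonal Toeplitz matrix with diagonal `a` and off-diagonal `b` is inverted by
its discrete Green's function `u (min k j) * v (max k j) / W`, where `u` and `v` solve the
three-term recurrence `b u(i-1) + a u(i) + b u(i+1) = 0`, `u` vanishes just before the first
index and `v` just after the last, and `W` is their Casoratian, which the recurrence keeps
constant. For `a = 1`, `b = q` the sequences `r^i U_i(α)` and `r^i U_{n-1-i}(α)` with
`r = -q/|q|` are such solutions, since `U_{m-1} + U_{m+1} = 2α U_m`, `U_{-1} = 0` and
`2α q r = -1`; their Casoratian is `|q| U_n(α)`, which is positive because `α > 1`.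
-/

open Matrix Polynomial

section Tridiagonal

variable {𝕜 : Type*} [Field 𝕜]

def tridiagToeplitz (n : ℕ) (a b : 𝕜) : Matrix (Fin n) (Fin n) 𝕜 :=
  Matrix.of fun k j => if k = j then a else if ((k : ℤ) - (j : ℤ)).natAbs = 1 then b else 0

def IsTridiagSolution (a b : 𝕜) (u : ℤ → 𝕜) : Prop :=
  ∀ i, b * u (i - 1) + a * u i + b * u (i + 1) = 0

def casoratian (b : 𝕜) (u v : ℤ → 𝕜) (i : ℤ) : 𝕜 :=
  b * (u i * v (i + 1) - u (i + 1) * v i)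

def greenFun (u v : ℤ → 𝕜) (W : 𝕜) (k j : ℤ) : 𝕜 :=
  u (min k j) * v (max k j) / W

def greenMatrix (n : ℕ) (u v : ℤ → 𝕜) (W : 𝕜) : Matrix (Fin n) (Fin n) 𝕜 :=
  Matrix.of fun k j => greenFun u v W k j

lemma greenMatrix_isSymm (n : ℕ) (u v : ℤ → 𝕜) (W : 𝕜) :
    (greenMatrix n u v W).IsSymm := by
  ext k j
  simp only [greenMatrix, greenFun, transpose_apply, of_apply, min_comm, max_comm]

variable {a b : 𝕜} {u v : ℤ → 𝕜}

lemma tridiagToeplitz_apply {n : ℕ} (i j : Fin n) :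
    tridiagToeplitz n a b i j = (if (i : ℤ) = j then a else 0) +
      (if (i : ℤ) = j - 1 then b else 0) + (if (i : ℤ) = j + 1 then b else 0) := by
  simp only [tridiagToeplitz, of_apply, Fin.ext_iff]
  split_ifs <;> first | omega | ring

lemma sum_fin_ite_eq_of_boundary {n : ℕ} (f : ℤ → 𝕜) (hf0 : f (-1) = 0) (hfn : f n = 0)
    {m : ℤ} (h1 : -1 ≤ m) (h2 : m ≤ n) :
    ∑ i : Fin n, (if (i : ℤ) = m then f i else 0) = f m := by
  rcases (show m = -1 ∨ m = n ∨ 0 ≤ m ∧ m < n by omega) with rfl | rfl | ⟨h0, hmn⟩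
  · rw [hf0]
    exact Finset.sum_eq_zero fun i _ => if_neg (by omega)
  · rw [hfn]
    exact Finset.sum_eq_zero fun i _ => if_neg (by omega)
  · lift m to ℕ using h0
    have hi : ∀ i : Fin n, (i : ℤ) = m ↔ i = ⟨m, by omega⟩ := fun i => by
      simp [Fin.ext_iff]
    simp_rw [hi]
    simp

lemma sum_mul_tridiagToeplitz_apply {n : ℕ} (f : ℤ → 𝕜) (hf0 : f (-1) = 0) (hfn : f n = 0)
    (j : Fin n) :
    ∑ i : Fin n, f i * tridiagToeplitz n a b i j = b * f (j - 1) + a * f j + b * f (j + 1) := by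
  have hj := j.isLt
  simp only [tridiagToeplitz_apply, mul_add, mul_ite, mul_zero, Finset.sum_add_distrib]
  rw [sum_fin_ite_eq_of_boundary (fun i => f i * a) (by simp [hf0]) (by simp [hfn])
      (by omega) (by omega),
    sum_fin_ite_eq_of_boundary (fun i => f i * b) (by simp [hf0]) (by simp [hfn])
      (by omega) (by omega),
    sum_fin_ite_eq_of_boundary (fun i => f i * b) (by simp [hf0]) (by simp [hfn])
      (by omega) (by omega)]
  ring

lemma casoratian_succ (hu : IsTridiagSolution a b u) (hv : IsTridiagSolution a b v) (i : ℤ) :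
    casoratian b u v (i + 1) = casoratian b u v i := by
  have hui := hu (i + 1)
  have hvi := hv (i + 1)
  simp only [add_sub_cancel_right] at hui hvi
  unfold casoratian
  linear_combination u (i + 1) * hvi - v (i + 1) * hui

lemma casoratian_eq (hu : IsTridiagSolution a b u) (hv : IsTridiagSolution a b v) (i : ℤ) :
    casoratian b u v i = casoratian b u v 0 := by
  have hper : Function.Periodic (casoratian b u v) 1 := casoratian_succ hu hv
  simpa using hper.int_mul_eq i

lemma greenFun_three_term (hu : IsTridiagSolution a b u) (hv : IsTridiagSolution a b v)
    {W : 𝕜} (hW : casoratian b u v 0 = W) (hW0 : W ≠ 0) (k j : ℤ) :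
    b * greenFun u v W k (j - 1) + a * greenFun u v W k j + b * greenFun u v W k (j + 1) =
      if k = j then 1 else 0 := by
  unfold greenFun
  rcases lt_trichotomy k j with hkj | rfl | hkj
  · rw [if_neg hkj.ne, min_eq_left (by omega), min_eq_left (by omega), min_eq_left (by omega),
      max_eq_right (by omega), max_eq_right (by omega), max_eq_right (by omega)]
    linear_combination u k / W * hv j
  · have hk : casoratian b u v k = W := (casoratian_eq hu hv k).trans hW
    rw [if_pos rfl, min_eq_right (by omega), min_self, min_eq_left (by omega),
      max_eq_left (by omega), max_self, max_eq_right (by omega)]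
    field_simp
    unfold casoratian at hk
    linear_combination v k * hu k + hk
  · rw [if_neg hkj.ne', min_eq_right (by omega), min_eq_right (by omega), min_eq_right (by omega),
      max_eq_left (by omega), max_eq_left (by omega), max_eq_left (by omega)]
    linear_combination v k / W * hu j

theorem greenMatrix_mul_tridiagToeplitz {n : ℕ} (hu : IsTridiagSolution a b u)
    (hv : IsTridiagSolution a b v) (hu0 : u (-1) = 0) (hvn : v n = 0) {W : 𝕜}
    (hW : casoratian b u v 0 = W) (hW0 : W ≠ 0) :
    greenMatrix n u v W * tridiagToeplitz n a b = 1 := by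
  ext k j
  rw [mul_apply, one_apply]
  simp only [greenMatrix, of_apply]
  rw [sum_mul_tridiagToeplitz_apply (greenFun u v W k)
      (by simp [greenFun, hu0]) (by simp [greenFun, hvn]) j,
    greenFun_three_term hu hv hW hW0]
  simp only [Nat.cast_inj, Fin.val_inj]

lemma isTridiagSolution_zpow_mul {x r : 𝕜} (hr : r * r = 1) (hab : 2 * x * b * r + a = 0)
    {f : ℤ → 𝕜} (hf : ∀ m, f (m - 1) + f (m + 1) = 2 * x * f m) :
    IsTridiagSolution a b fun i => r ^ i * f i := by
  have hr0 : r ≠ 0 := left_ne_zero_of_mul_eq_one hr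
  intro i
  simp only [zpow_sub_one₀ hr0, zpow_add_one₀ hr0, inv_eq_of_mul_eq_one_right hr]
  linear_combination r ^ i * (b * r * hf i + f i * hab)

end Tridiagonal

namespace Polynomial.Chebyshev

variable {R : Type*} [CommRing R]

lemma U_eval_sub_one_add_U_eval_add_one (x : R) (m : ℤ) :
    (U R (m - 1)).eval x + (U R (m + 1)).eval x = 2 * x * (U R m).eval x := by
  simp [U_add_one]

lemma U_eval_sub_sub_one_add_U_eval_sub_add_one (x : R) (c m : ℤ) :
    (U R (c - (m - 1))).eval x + (U R (c - (m + 1))).eval x = 2 * x * (U R (c - m)).eval x := by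
  rw [← U_eval_sub_one_add_U_eval_add_one, add_comm]
  ring_nf

lemma U_eval_pos {x : ℝ} (hx : 1 ≤ x) (n : ℕ) : 0 < (U ℝ n).eval x := by
  have key : ∀ n : ℕ, 0 < (U ℝ n).eval x ∧ (U ℝ n).eval x ≤ (U ℝ (n + 1)).eval x := by
    intro n
    induction n with
    | zero => simpa using (by linarith : (1 : ℝ) ≤ 2 * x)
    | succ k ih =>
      have hrec := U_eval_sub_one_add_U_eval_add_one x ((k : ℤ) + 1)
      push_cast at hrec ⊢
      simp only [add_sub_cancel_right, add_assoc, one_add_one_eq_two] at hrec ⊢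
      constructor <;> nlinarith
  exact (key n).1

end Polynomial.Chebyshev

lemma neg_one_pow_add_mul_pow_sub_div {q : ℝ} (hq : q ≠ 0) {k j : ℕ} (hkj : k ≤ j) :
    (-1 : ℝ) ^ (k + j) * (q ^ (j - k) / |q| ^ (j - k + 1)) =
      (-q / |q|) ^ k * (-q / |q|) ^ j / |q| := by
  obtain ⟨d, rfl⟩ := Nat.exists_eq_add_of_le hkj
  have hsq : (-q / |q|) ^ 2 = 1 := by
    rw [div_pow, neg_sq, sq_abs, div_self (pow_ne_zero 2 hq)]
  have hsign : (-q / |q|) ^ k * (-q / |q|) ^ (k + d) = (-q / |q|) ^ d := by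
    rw [← pow_add, ← add_assoc, ← two_mul, pow_add, pow_mul, hsq, one_pow, one_mul]
  have hneg : (-1 : ℝ) ^ (k + (k + d)) = (-1) ^ d := by
    rw [← add_assoc, ← two_mul, pow_add, pow_mul]
    norm_num
  rw [hsign, hneg, Nat.add_sub_cancel_left, div_pow, neg_pow q, pow_succ]
  ring

open Polynomial.Chebyshev in
theorem greenMatrix_chebyshevU_mul_tridiagToeplitz (n : ℕ) {q α : ℝ} (hq : q ≠ 0)
    (hα : 2 * α * |q| = 1) (hU : (U ℝ n).eval α ≠ 0) :
    greenMatrix n (fun i => (-q / |q|) ^ i * (U ℝ i).eval α)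
      (fun i => (-q / |q|) ^ i * (U ℝ (n - 1 - i)).eval α) (|q| * (U ℝ n).eval α) *
        tridiagToeplitz n 1 q = 1 := by
  set r := -q / |q| with hr_def
  have hqr : q * r = -|q| := by
    rw [hr_def]; field_simp; simp [sq_abs]
  have hr : r * r = 1 := by
    rw [hr_def]; field_simp; simp [sq_abs]
  have hαqr : 2 * α * q * r + 1 = 0 := by linear_combination 2 * α * hqr - hα
  refine greenMatrix_mul_tridiagToeplitz
    (isTridiagSolution_zpow_mul hr hαqr (U_eval_sub_one_add_U_eval_add_one α))
    (isTridiagSolution_zpow_mul hr hαqr (U_eval_sub_sub_one_add_U_eval_sub_add_one α _))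
    (by simp) (by simp) ?_ (mul_ne_zero (abs_ne_zero.mpr hq) hU)
  have hrec := U_eval_sub_one_add_U_eval_add_one α ((n : ℤ) - 1)
  simp only [casoratian, zpow_zero, zpow_one, U_zero, U_one, eval_one, eval_mul, eval_X,
    eval_ofNat, zero_add, sub_zero, sub_add_cancel] at hrec ⊢
  linear_combination q * r * hrec - (U ℝ n).eval α * hqr

open Polynomial.Chebyshev in
lemma greenMatrix_chebyshevU_apply_of_le {n : ℕ} {q : ℝ} (hq : q ≠ 0) (α : ℝ) {k j : Fin n}
    (hkj : k ≤ j) :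
    greenMatrix n (fun i => (-q / |q|) ^ i * (U ℝ i).eval α)
      (fun i => (-q / |q|) ^ i * (U ℝ (n - 1 - i)).eval α) (|q| * (U ℝ n).eval α) k j =
      (-1 : ℝ) ^ ((k : ℕ) + (j : ℕ)) *
        (q ^ ((j : ℕ) - (k : ℕ)) / |q| ^ ((j : ℕ) - (k : ℕ) + 1)) *
        ((U ℝ (k : ℕ)).eval α * (U ℝ ((n - 1 - (j : ℕ) : ℕ) : ℤ)).eval α /
          (U ℝ n).eval α) := by
  have hj : ((n - 1 - (j : ℕ) : ℕ) : ℤ) = n - 1 - j := by omega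
  have hkj' : (k : ℤ) ≤ j := Nat.cast_le.mpr hkj
  rw [neg_one_pow_add_mul_pow_sub_div hq hkj, hj]
  simp only [greenMatrix, greenFun, of_apply, min_eq_left hkj', max_eq_right hkj', zpow_natCast]
  field_simp

theorem stmt_19_general (n : ℕ) (q : ℝ) (hq0 : q ≠ 0) (hq : |q| < 1 / 2)
    (α : ℝ) (hα : α = 1 / (2 * |q|))
    (G M : Matrix (Fin n) (Fin n) ℝ)
    (hG : ∀ k j : Fin n, G k j =
      if k = j then 1 else if ((k : ℤ) - (j : ℤ)).natAbs = 1 then q else 0)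
    (hMsym : ∀ k j : Fin n, M k j = M j k)
    (hM : ∀ k j : Fin n, (k : ℕ) ≤ (j : ℕ) → M k j =
      (-1 : ℝ) ^ ((k : ℕ) + (j : ℕ)) *
        (q ^ ((j : ℕ) - (k : ℕ)) / |q| ^ ((j : ℕ) - (k : ℕ) + 1)) *
        ((Polynomial.Chebyshev.U ℝ (k : ℕ)).eval α *
          (Polynomial.Chebyshev.U ℝ ((n - 1 - (j : ℕ) : ℕ) : ℤ)).eval α /
          (Polynomial.Chebyshev.U ℝ (n : ℤ)).eval α)) :
    M * G = 1 := by
  have hUn : 0 < (Polynomial.Chebyshev.U ℝ n).eval α :=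
    Polynomial.Chebyshev.U_eval_pos (by rw [hα, le_div_iff₀ (by positivity)]; linarith) n
  set green := greenMatrix n (fun i => (-q / |q|) ^ i * (Polynomial.Chebyshev.U ℝ i).eval α)
    (fun i => (-q / |q|) ^ i * (Polynomial.Chebyshev.U ℝ (n - 1 - i)).eval α)
    (|q| * (Polynomial.Chebyshev.U ℝ n).eval α)
  have hsymm : green.IsSymm := greenMatrix_isSymm _ _ _ _
  have hM' : M = green := by
    ext k j
    rcases le_total k j with hkj | hkj
    · exact (hM k j hkj).trans (greenMatrix_chebyshevU_apply_of_le hq0 α hkj).symm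
    · rw [hMsym, hM j k hkj]
      exact ((hsymm.apply j k).trans (greenMatrix_chebyshevU_apply_of_le hq0 α hkj)).symm
  have hG' : G = tridiagToeplitz n 1 q := Matrix.ext hG
  rw [hM', hG']
  exact greenMatrix_chebyshevU_mul_tridiagToeplitz n hq0 (by rw [hα]; field_simp) hUn.ne'

/-- Explicit inverse of the `n×n` tridiagonal Toeplitz matrix `G_n` (diagonal `1`,
off-diagonals `q`, `0 < |q| < 1/2`) in terms of Chebyshev polynomials of the second
kind evaluated at `α = 1/(2|q|)`: the symmetric matrix `M` with
`M_{k,j} = (−1)^{k+j} (q^{j−k}/|q|^{j−k+1}) U_{k−1}(α) U_{n−j}(α) / U_n(α)` for `k ≤ j`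
(here written with 0-based indices) satisfies `M · G_n = 1`. -/
theorem stmt_19 (n : ℕ) (hn : 0 < n) (q : ℝ) (hq0 : q ≠ 0) (hq : |q| < 1 / 2)
    (α : ℝ) (hα : α = 1 / (2 * |q|))
    (G M : Matrix (Fin n) (Fin n) ℝ)
    (hG : ∀ k j : Fin n, G k j =
      if k = j then 1 else if ((k : ℤ) - (j : ℤ)).natAbs = 1 then q else 0)
    (hMsym : ∀ k j : Fin n, M k j = M j k)
    (hM : ∀ k j : Fin n, (k : ℕ) ≤ (j : ℕ) → M k j =
      (-1 : ℝ) ^ ((k : ℕ) + (j : ℕ)) *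
        (q ^ ((j : ℕ) - (k : ℕ)) / |q| ^ ((j : ℕ) - (k : ℕ) + 1)) *
        ((Polynomial.Chebyshev.U ℝ (k : ℕ)).eval α *
          (Polynomial.Chebyshev.U ℝ ((n - 1 - (j : ℕ) : ℕ) : ℤ)).eval α /
          (Polynomial.Chebyshev.U ℝ (n : ℤ)).eval α)) :
    M * G = 1 :=
  stmt_19_general n q hq0 hq α hα G M hG hMsym hM
end
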